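/- arXiv:0710.5894 — 2 statements merged into one kernel-verified Lean document; each statement's English description precedes it below -/
import Mathlib

section
/- Let S ⊆ {1, 2, 3, ...} be a measurable set of positive integers with density δ ∈ [0, 1], i.e., lim_{x→∞} #(S ∩ [1,x])/x = δ. Then the infinite product F(z) = ∏_{t ∈ S} (1 − z²/t²) converges locally uniformly on ℂ and defines an entire function of exponential type at most πδ. -/
/-!
Since `∑ 1/t² < ∞`, the product converges locally uniformly on `ℂ` (M-test), so it is entire.
For the growth, `|F(z)| ≤ ∏ (1 + r²/t²)` with `r = |z|`. If the counting function of `S` is at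
most `βx + K`, the `k`-th element of `S` is at least `(k - K)/β`, so apart from `K + 1` factors
bounded by `1 + r²` the product is dominated by `∏_{j ≥ 1} (1 + (βr)²/j²) = sinh(πβr)/(πβr)`,
which is at most `e^{πβr}` by Euler's sine product at `iβr`. Taking `β` slightly above `δ` and
absorbing `(1 + r²)^(K+1)` into `e^{εr}` gives exponential type `πδ`.
-/

open Filter Real

/-- `Λ` is a measurable set of positive integers with density `δ`. -/
def HasDensity (Λ : Set ℕ) (δ : ℝ) : Prop :=
  Tendsto (fun x : ℝ => ({m ∈ Λ | 1 ≤ m ∧ (m : ℝ) ≤ x}.ncard : ℝ) / x) atTop (nhds δ)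

open Finset

section InfiniteProduct

variable {ι : Type*} {a : ι → ℂ}

theorem hasProdLocallyUniformlyOn_one_sub_sq_div_sq (ha : Summable fun i => (‖a i‖ ^ 2)⁻¹) :
    HasProdLocallyUniformlyOn (fun i z => 1 - z ^ 2 / a i ^ 2)
      (fun z => ∏' i, (1 - z ^ 2 / a i ^ 2)) Set.univ := by
  simp_rw [sub_eq_add_neg]
  refine hasProdLocallyUniformlyOn_of_forall_compact isOpen_univ fun K _ hK => ?_
  obtain ⟨R, hR⟩ := hK.isBounded.exists_norm_le
  refine ha.mul_left (R ^ 2) |>.hasProdUniformlyOn_one_add hK (.of_forall fun i z hz => ?_)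
    fun i => by fun_prop
  rw [norm_neg, norm_div, norm_pow, norm_pow, div_eq_mul_inv]
  gcongr
  exact hR z hz

theorem differentiable_tprod_one_sub_sq_div_sq (ha : Summable fun i => (‖a i‖ ^ 2)⁻¹) :
    Differentiable ℂ fun z => ∏' i, (1 - z ^ 2 / a i ^ 2) :=
  differentiableOn_univ.mp <| (hasProdLocallyUniformlyOn_one_sub_sq_div_sq ha).differentiableOn
    (.of_forall fun N => by simpa [Finset.prod_fn] using
      DifferentiableOn.finsetProd fun _ _ => by fun_prop) isOpen_univ

end InfiniteProduct

theorem Real.sinh_le_mul_exp (x : ℝ) : sinh x ≤ x * exp x := by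
  have h := add_one_le_exp (-(2 * x))
  have hexp : exp (-x) = exp x * exp (-(2 * x)) := by rw [← exp_add]; ring_nf
  rw [sinh_eq, hexp]
  nlinarith [exp_pos x]

theorem Real.tendsto_euler_sinh_prod (x : ℝ) :
    Tendsto (fun n : ℕ => π * x * ∏ j ∈ range n, (1 + x ^ 2 / ((j : ℝ) + 1) ^ 2))
      atTop (nhds (sinh (π * x))) := by
  have h := (Complex.tendsto_euler_sin_prod (x * Complex.I)).mul_const (-Complex.I)
  have hsin : Complex.sin (π * (x * Complex.I)) * -Complex.I = (sinh (π * x) : ℂ) := by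
    rw [← mul_assoc, Complex.sin_mul_I, mul_assoc, mul_neg, Complex.I_mul_I, neg_neg, mul_one]
    push_cast
    rfl
  have hterm : ∀ j : ℕ, (1 - (x * Complex.I) ^ 2 / ((j : ℂ) + 1) ^ 2 : ℂ)
      = ((1 + x ^ 2 / ((j : ℝ) + 1) ^ 2 : ℝ) : ℂ) := fun j => by
    push_cast
    rw [mul_pow, Complex.I_sq]
    ring
  rw [hsin] at h
  simp_rw [hterm, ← Complex.ofReal_prod] at h
  refine (Complex.continuous_re.tendsto _).comp h |>.congr fun n => ?_
  rw [Function.comp_apply, ← Complex.ofReal_re (π * x * _)]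
  congr 1
  generalize ∏ j ∈ range n, (1 + x ^ 2 / ((j : ℝ) + 1) ^ 2) = P
  push_cast
  linear_combination -(π * x * P : ℂ) * Complex.I_sq

theorem prod_range_one_add_sq_div_succ_sq_le_exp {x : ℝ} (hx : 0 ≤ x) (n : ℕ) :
    ∏ j ∈ range n, (1 + x ^ 2 / ((j : ℝ) + 1) ^ 2) ≤ exp (π * x) := by
  rcases hx.eq_or_lt with rfl | hx
  · simp
  have hπx : 0 < π * x := by positivity
  have hmono : Monotone fun n : ℕ => π * x * ∏ j ∈ range n, (1 + x ^ 2 / ((j : ℝ) + 1) ^ 2) :=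
    monotone_nat_of_le_succ fun n => by
      rw [prod_range_succ]
      gcongr
      exact le_mul_of_one_le_right (by positivity) (le_add_of_nonneg_right (by positivity))
  have h := hmono.ge_of_tendsto (Real.tendsto_euler_sinh_prod x) n
  refine le_of_mul_le_mul_left ?_ hπx
  exact h.trans (Real.sinh_le_mul_exp _)

theorem Finset.prod_le_prod_range_of_le_rank {α : Type*} [LinearOrder α] {v : Finset α}
    {f : α → ℝ} {b : ℕ → ℝ} {n : ℕ} (hn : #v < n) (hf : ∀ m ∈ v, 0 ≤ f m)
    (hb : ∀ k, 1 ≤ b k) (hfb : ∀ m ∈ v, f m ≤ b #{x ∈ v | x ≤ m}) :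
    ∏ m ∈ v, f m ≤ ∏ k ∈ range n, b k := by
  classical
  set rank : α → ℕ := fun m => #{x ∈ v | x ≤ m}
  have hinj : Set.InjOn rank v := by
    intro x hx y hy hxy
    wlog hle : x ≤ y generalizing x y
    · exact (this hy hx hxy.symm (le_of_not_ge hle)).symm
    have hsub : {x' ∈ v | x' ≤ x} ⊆ {x' ∈ v | x' ≤ y} :=
      fun z hz => mem_filter.2 ⟨(mem_filter.1 hz).1, (mem_filter.1 hz).2.trans hle⟩
    have hy' : y ∈ {x' ∈ v | x' ≤ x} := by
      rw [eq_of_subset_of_card_le hsub hxy.ge]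
      exact mem_filter.2 ⟨hy, le_rfl⟩
    exact le_antisymm hle (mem_filter.1 hy').2
  have hrange : v.image rank ⊆ range n := by
    intro k hk
    obtain ⟨m, -, rfl⟩ := mem_image.1 hk
    exact mem_range.2 ((card_filter_le _ _).trans_lt hn)
  calc ∏ m ∈ v, f m ≤ ∏ m ∈ v, b (rank m) := prod_le_prod hf hfb
    _ = ∏ k ∈ v.image rank, b k := (prod_image hinj).symm
    _ ≤ ∏ k ∈ range n, b k :=
        prod_le_prod_of_subset_of_one_le hrange (fun k _ => zero_le_one.trans (hb k))
          fun k _ _ => hb k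

theorem prod_one_add_sq_div_sq_le_of_rank_le {v : Finset ℕ} {β r : ℝ} {K : ℕ} (hβ : 0 ≤ β)
    (hr : 0 ≤ r) (hv0 : ∀ m ∈ v, 0 < m) (hv : ∀ m ∈ v, (#{x ∈ v | x ≤ m} : ℝ) ≤ β * m + K) :
    ∏ m ∈ v, (1 + r ^ 2 / (m : ℝ) ^ 2) ≤ (1 + r ^ 2) ^ (K + 1) * exp (π * (β * r)) := by
  -- A rank `k > K` forces `m ≥ (k - K) / β`; smaller ranks only get the trivial bound `1 + r²`.
  set b : ℕ → ℝ := fun k => if k ≤ K then 1 + r ^ 2 else 1 + (β * r) ^ 2 / ((k : ℝ) - K) ^ 2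
  have hb : ∀ k, 1 ≤ b k := fun k => by
    simp only [b]
    split_ifs <;> exact le_add_of_nonneg_right (by positivity)
  have hfb : ∀ m ∈ v, 1 + r ^ 2 / (m : ℝ) ^ 2 ≤ b #{x ∈ v | x ≤ m} := by
    intro m hm
    have hm1 : (1 : ℝ) ≤ m := by exact_mod_cast hv0 m hm
    simp only [b]
    split_ifs with hk
    · gcongr
      exact div_le_self (sq_nonneg r) (one_le_pow₀ hm1)
    · have hk1 : (1 : ℝ) ≤ (#{x ∈ v | x ≤ m} : ℝ) - K := by
        push Not at hk
        have : (K : ℝ) + 1 ≤ #{x ∈ v | x ≤ m} := by exact_mod_cast hk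
        linarith
      have hkm : (#{x ∈ v | x ≤ m} : ℝ) - K ≤ β * m := by linarith [hv m hm]
      gcongr 1 + ?_
      rw [div_le_div_iff₀ (by positivity) (by positivity), mul_pow]
      have : ((#{x ∈ v | x ≤ m} : ℝ) - K) ^ 2 ≤ (β * m) ^ 2 := by gcongr
      nlinarith [sq_nonneg r]
  calc ∏ m ∈ v, (1 + r ^ 2 / (m : ℝ) ^ 2) ≤ ∏ k ∈ range (K + 1 + #v), b k :=
        prod_le_prod_range_of_le_rank (by omega) (fun _ _ => by positivity) hb hfb
    _ = (1 + r ^ 2) ^ (K + 1) * ∏ j ∈ range #v, (1 + (β * r) ^ 2 / ((j : ℝ) + 1) ^ 2) := by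
        rw [prod_range_add]
        congr 1
        · rw [prod_congr rfl fun k hk => if_pos (Nat.lt_succ_iff.1 (mem_range.1 hk)), prod_const,
            card_range]
        · refine prod_congr rfl fun j _ => ?_
          simp only [b, if_neg (by omega : ¬K + 1 + j ≤ K)]
          push_cast
          ring_nf
    _ ≤ (1 + r ^ 2) ^ (K + 1) * exp (π * (β * r)) := by
        gcongr
        exact prod_range_one_add_sq_div_succ_sq_le_exp (by positivity) _

theorem setOf_mem_le_subset_Icc (S : Set ℕ) (n : ℕ) :
    {m ∈ S | 1 ≤ m ∧ (m : ℝ) ≤ n} ⊆ Set.Icc 1 n :=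
  fun _ hm => ⟨hm.2.1, by exact_mod_cast hm.2.2⟩

theorem HasDensity.exists_ncard_le {S : Set ℕ} {δ β : ℝ} (hd : HasDensity S δ) (hβ : 0 ≤ β)
    (hδβ : δ < β) : ∃ K : ℕ, ∀ n : ℕ, ({m ∈ S | 1 ≤ m ∧ (m : ℝ) ≤ n}.ncard : ℝ) ≤ β * n + K := by
  obtain ⟨X, hX⟩ := eventually_atTop.1 (hd.eventually_lt_const hδβ)
  refine ⟨⌈X⌉₊, fun n => ?_⟩
  by_cases hn : X ≤ n ∧ 0 < n
  · have := (div_lt_iff₀ (by exact_mod_cast hn.2 : (0 : ℝ) < n)).1 (hX n hn.1)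
    linarith [(Nat.cast_nonneg ⌈X⌉₊ : (0 : ℝ) ≤ _)]
  · have hcount : ({m ∈ S | 1 ≤ m ∧ (m : ℝ) ≤ n}.ncard : ℝ) ≤ n := by
      have := Set.ncard_le_ncard (setOf_mem_le_subset_Icc S n) (Set.finite_Icc 1 n)
      rw [Set.ncard_Icc_nat] at this
      exact_mod_cast this.trans (by omega)
    have hnX : (n : ℝ) ≤ ⌈X⌉₊ := by
      rcases not_and_or.1 hn with hXn | hn0
      · exact (not_le.1 hXn).le.trans (Nat.le_ceil X)
      · simp [Nat.eq_zero_of_not_pos hn0]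
    linarith [mul_nonneg hβ (Nat.cast_nonneg (α := ℝ) n)]

theorem prod_one_add_sq_div_sq_le_of_ncard_le {S : Set ℕ} (hS : S ⊆ {m : ℕ | 0 < m}) {β r : ℝ}
    {K : ℕ} (hβ : 0 ≤ β) (hr : 0 ≤ r)
    (hK : ∀ n : ℕ, ({m ∈ S | 1 ≤ m ∧ (m : ℝ) ≤ n}.ncard : ℝ) ≤ β * n + K) (N : Finset S) :
    ∏ t ∈ N, (1 + r ^ 2 / ((t : ℕ) : ℝ) ^ 2) ≤ (1 + r ^ 2) ^ (K + 1) * exp (π * (β * r)) := by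
  refine (prod_map N (Function.Embedding.subtype _) fun m : ℕ => 1 + r ^ 2 / (m : ℝ) ^ 2)
    |>.symm.trans_le ?_
  have hmem : ∀ m ∈ N.map (Function.Embedding.subtype _), m ∈ S := by
    intro m hm
    obtain ⟨t, -, rfl⟩ := mem_map.1 hm
    exact t.2
  refine prod_one_add_sq_div_sq_le_of_rank_le hβ hr (fun m hm => hS (hmem m hm)) fun m hm => ?_
  refine le_trans ?_ (hK m)
  rw [← Set.ncard_coe_finset]
  gcongr
  · exact (Set.finite_Icc 1 m).subset (setOf_mem_le_subset_Icc S m)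
  · intro x hx
    rw [coe_filter] at hx
    exact ⟨hmem x hx.1, hS (hmem x hx.1), by exact_mod_cast hx.2⟩

theorem summable_inv_norm_natCast_sq (S : Set ℕ) :
    Summable fun t : S => (‖((t : ℕ) : ℂ)‖ ^ 2)⁻¹ := by
  simp only [Complex.norm_natCast]
  exact (Real.summable_nat_pow_inv.2 one_lt_two).subtype S

theorem norm_tprod_one_sub_sq_div_sq_le {S : Set ℕ} (hS : S ⊆ {m : ℕ | 0 < m}) {β : ℝ} {K : ℕ}
    (hβ : 0 ≤ β) (hK : ∀ n : ℕ, ({m ∈ S | 1 ≤ m ∧ (m : ℝ) ≤ n}.ncard : ℝ) ≤ β * n + K)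
    (z : ℂ) :
    ‖∏' t : S, (1 - z ^ 2 / ((t : ℕ) : ℂ) ^ 2)‖
      ≤ (1 + ‖z‖ ^ 2) ^ (K + 1) * exp (π * (β * ‖z‖)) := by
  refine le_of_tendsto' ((hasProdLocallyUniformlyOn_one_sub_sq_div_sq
    (summable_inv_norm_natCast_sq S)).hasProd (Set.mem_univ z)).norm fun N => ?_
  calc ∏ t ∈ N, ‖1 - z ^ 2 / ((t : ℕ) : ℂ) ^ 2‖
      ≤ ∏ t ∈ N, (1 + ‖z‖ ^ 2 / ((t : ℕ) : ℝ) ^ 2) :=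
        prod_le_prod (fun _ _ => norm_nonneg _) fun _ _ => (norm_sub_le _ _).trans_eq (by simp)
    _ ≤ (1 + ‖z‖ ^ 2) ^ (K + 1) * exp (π * (β * ‖z‖)) :=
        prod_one_add_sq_div_sq_le_of_ncard_le hS hβ (norm_nonneg z) hK N

theorem one_add_sq_le_mul_exp {c r : ℝ} (hc : 0 < c) (hr : 0 ≤ r) :
    1 + r ^ 2 ≤ (1 + 2 / c ^ 2) * exp (c * r) := by
  have h := quadratic_le_exp_of_nonneg (mul_nonneg hc.le hr)
  calc 1 + r ^ 2 = 1 + 2 / c ^ 2 * ((c * r) ^ 2 / 2) := by field_simp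
    _ ≤ exp (c * r) + 2 / c ^ 2 * exp (c * r) := by
        gcongr
        · exact one_le_exp (by positivity)
        · linarith [mul_nonneg hc.le hr]
    _ = (1 + 2 / c ^ 2) * exp (c * r) := by ring

theorem product_entire_of_density_general (S : Set ℕ) (δ : ℝ)
    (hS : S ⊆ {m : ℕ | 0 < m}) (hδ0 : 0 ≤ δ)
    (hd : HasDensity S δ) :
    ∃ F : ℂ → ℂ,
      TendstoLocallyUniformly
        (fun (N : Finset S) (z : ℂ) => ∏ t ∈ N, (1 - z ^ 2 / ((t : ℕ) : ℂ) ^ 2))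
        F atTop ∧
      (∀ z : ℂ, F z = ∏' t : S, (1 - z ^ 2 / ((t : ℕ) : ℂ) ^ 2)) ∧
      Differentiable ℂ F ∧
      ∀ ε > (0 : ℝ), ∃ C : ℝ, ∀ z : ℂ,
        ‖F z‖ ≤ C * Real.exp ((π * δ + ε) * ‖z‖) := by
  have hsum := summable_inv_norm_natCast_sq S
  refine ⟨_, tendstoLocallyUniformlyOn_univ.1 (hasProdLocallyUniformlyOn_one_sub_sq_div_sq hsum),
    fun _ => rfl, differentiable_tprod_one_sub_sq_div_sq hsum, fun ε hε => ?_⟩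
  obtain ⟨K, hK⟩ := hd.exists_ncard_le (β := δ + ε / (2 * π)) (by positivity)
    (lt_add_of_pos_right δ (by positivity))
  set c := ε / (2 * (K + 1))
  refine ⟨(1 + 2 / c ^ 2) ^ (K + 1), fun z => ?_⟩
  calc ‖∏' t : S, (1 - z ^ 2 / ((t : ℕ) : ℂ) ^ 2)‖
      ≤ (1 + ‖z‖ ^ 2) ^ (K + 1) * exp (π * ((δ + ε / (2 * π)) * ‖z‖)) :=
        norm_tprod_one_sub_sq_div_sq_le hS (by positivity) hK z
    _ ≤ ((1 + 2 / c ^ 2) * exp (c * ‖z‖)) ^ (K + 1) * exp (π * ((δ + ε / (2 * π)) * ‖z‖)) := by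
        gcongr
        exact one_add_sq_le_mul_exp (by positivity) (norm_nonneg z)
    _ = (1 + 2 / c ^ 2) ^ (K + 1) * exp ((π * δ + ε) * ‖z‖) := by
        rw [mul_pow, ← exp_nat_mul, mul_assoc, ← exp_add]
        congr 2
        simp only [c]
        push_cast
        field_simp
        ring

/-- The infinite product `∏_{t ∈ S} (1 - z²/t²)` over a measurable set `S` of
positive integers of density `δ` converges locally uniformly to an entire
function of exponential type at most `πδ`. -/
theorem product_entire_of_density (S : Set ℕ) (δ : ℝ)
    (hS : S ⊆ {m : ℕ | 0 < m}) (hδ0 : 0 ≤ δ) (hδ1 : δ ≤ 1)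
    (hd : HasDensity S δ) :
    ∃ F : ℂ → ℂ,
      TendstoLocallyUniformly
        (fun (N : Finset S) (z : ℂ) => ∏ t ∈ N, (1 - z ^ 2 / ((t : ℕ) : ℂ) ^ 2))
        F atTop ∧
      (∀ z : ℂ, F z = ∏' t : S, (1 - z ^ 2 / ((t : ℕ) : ℂ) ^ 2)) ∧
      Differentiable ℂ F ∧
      ∀ ε > (0 : ℝ), ∃ C : ℝ, ∀ z : ℂ,
        ‖F z‖ ≤ C * Real.exp ((π * δ + ε) * ‖z‖) :=
  product_entire_of_density_general S δ hS hδ0 hd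
end

section
/- Let F(z) = ∏_{t ∈ S} (1 − z²/t²) where S is a measurable set of positive integers of density δ. Then for real y, lim_{|y|→∞} log|F(iy)|/|y| = πδ, i.e., on the imaginary axis the growth of log|F| is exactly πδ|y| + o(|y|). -/
open Filter Real

/-!
On the imaginary axis every factor is real and positive, `F(iy) = ∏ (1 + y²/t²)`, so
`log |F(iy)| = ∑_{t ∈ S} log (1 + y²/t²)`. Writing `log (1 + y²/t²) = ∫_t^∞ 2y² / (x (x² + y²)) dx`
and summing under the integral gives `∫_0^∞ N(x) · 2y² / (x (x² + y²)) dx`, where `N` counts `S`.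
The substitution `x = yu` turns this, divided by `y`, into `∫_0^∞ (N(yu)/(yu)) · 2/(1 + u²) du`,
which tends to `δ ∫_0^∞ 2/(1 + u²) du = πδ` by dominated convergence, as `0 ≤ N(x)/x ≤ 1`.
For `y → -∞` use that the sum is even in `y`.
-/

open Set MeasureTheory

/-- `HasDensity S δ` is by definition the convergence of `countingFunction S x / x` to `δ`. -/
noncomputable def countingFunction (S : Set ℕ) (x : ℝ) : ℝ :=
  ({m ∈ S | 1 ≤ m ∧ (m : ℝ) ≤ x}.ncard : ℝ)

namespace countingFunction

variable (S : Set ℕ)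

theorem monotone : Monotone (countingFunction S) := by
  intro a b hab
  have hfin : {m ∈ S | 1 ≤ m ∧ (m : ℝ) ≤ b}.Finite :=
    (finite_Iic ⌊b⌋₊).subset fun m hm => Nat.le_floor hm.2.2
  exact Nat.cast_le.mpr <| ncard_le_ncard (fun m ⟨hS, h1, ha⟩ => ⟨hS, h1, ha.trans hab⟩) hfin

theorem le_floor (x : ℝ) : countingFunction S x ≤ ⌊x⌋₊ := by
  have hsub : {m ∈ S | 1 ≤ m ∧ (m : ℝ) ≤ x} ⊆ Icc 1 ⌊x⌋₊ :=
    fun m ⟨_, h1, hx⟩ => ⟨h1, Nat.le_floor hx⟩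
  have := ncard_le_ncard hsub (finite_Icc _ _)
  rw [ncard_Icc_nat] at this
  exact Nat.cast_le.mpr (this.trans (by omega))

theorem nonneg (x : ℝ) : 0 ≤ countingFunction S x := Nat.cast_nonneg _

theorem eq_zero_of_nonpos {x : ℝ} (hx : x ≤ 0) : countingFunction S x = 0 := by
  have := le_floor S x
  rw [Nat.floor_of_nonpos hx] at this
  exact le_antisymm (by exact_mod_cast this) (nonneg S x)

theorem abs_div_le_one (x : ℝ) : |countingFunction S x / x| ≤ 1 := by
  rcases le_or_gt x 0 with hx | hx
  · simp [eq_zero_of_nonpos S hx]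
  · rw [abs_of_nonneg (div_nonneg (nonneg S x) hx.le), div_le_one hx]
    exact (le_floor S x).trans (Nat.floor_le hx.le)

variable {S} in
theorem tsum_indicator_Ici (hS : S ⊆ {m | 0 < m}) (x : ℝ) :
    ∑' t : S, (Ici ((t : ℕ) : ℝ)).indicator 1 x = countingFunction S x := by
  classical
  set A := {m ∈ S | 1 ≤ m ∧ (m : ℝ) ≤ x}
  have hA : A.Finite := (finite_Iic ⌊x⌋₊).subset fun m hm => Nat.le_floor hm.2.2
  have hind :
      S.indicator (fun m : ℕ => (Ici (m : ℝ)).indicator (1 : ℝ → ℝ) x) = A.indicator 1 := by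
    ext m
    by_cases hm : m ∈ S
    · have hmA : m ∈ A ↔ (m : ℝ) ≤ x := ⟨fun h => h.2.2, fun h => ⟨hm, hS hm, h⟩⟩
      rw [indicator_of_mem hm, indicator_apply, indicator_apply]
      simp only [hmA, mem_Ici, Pi.one_apply]
    · have hmA : m ∉ A := fun h => hm h.1
      rw [indicator_of_notMem hm, indicator_of_notMem hmA]
  rw [tsum_subtype S (fun m : ℕ => (Ici (m : ℝ)).indicator (1 : ℝ → ℝ) x), hind,
    tsum_eq_sum (s := hA.toFinset) (fun m hm => indicator_of_notMem (by simpa using hm) _),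
    Finset.sum_congr rfl fun m hm => indicator_of_mem (hA.mem_toFinset.mp hm) _]
  simp only [Pi.one_apply, Finset.sum_const, nsmul_one, countingFunction]
  exact_mod_cast (ncard_eq_toFinset_card A hA).symm

end countingFunction

theorem hasDerivAt_neg_log_one_add_sq_div_sq (y : ℝ) {x : ℝ} (hx : 0 < x) :
    HasDerivAt (fun x : ℝ => -log (1 + y ^ 2 / x ^ 2)) (2 * y ^ 2 / (x * (x ^ 2 + y ^ 2))) x := by
  have hpos : 0 < 1 + y ^ 2 / x ^ 2 := by positivity
  have hquot :
      HasDerivAt (fun x : ℝ => 1 + y ^ 2 / x ^ 2) (y ^ 2 * (-(2 * x) / (x ^ 2) ^ 2)) x := by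
    simpa [div_eq_mul_inv] using
      (((hasDerivAt_pow 2 x).inv (by positivity)).const_mul (y ^ 2)).const_add 1
  refine (hquot.log hpos.ne').neg.congr_deriv ?_
  field_simp

theorem integrableOn_and_integral_Ioi_eq_log_one_add_sq_div_sq (y : ℝ) {a : ℝ} (ha : 0 < a) :
    IntegrableOn (fun x => 2 * y ^ 2 / (x * (x ^ 2 + y ^ 2))) (Ioi a) ∧
      ∫ x in Ioi a, 2 * y ^ 2 / (x * (x ^ 2 + y ^ 2)) = log (1 + y ^ 2 / a ^ 2) := by
  have hcont : ContinuousWithinAt (fun x : ℝ => -log (1 + y ^ 2 / x ^ 2)) (Ici a) a :=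
    (hasDerivAt_neg_log_one_add_sq_div_sq y ha).continuousAt.continuousWithinAt
  have hderiv x (hx : x ∈ Ioi a) := hasDerivAt_neg_log_one_add_sq_div_sq y (ha.trans hx)
  have hnonneg x (hx : x ∈ Ioi a) : 0 ≤ 2 * y ^ 2 / (x * (x ^ 2 + y ^ 2)) := by
    have : 0 < x := ha.trans hx
    positivity
  have hlim : Tendsto (fun x : ℝ => -log (1 + y ^ 2 / x ^ 2)) atTop (nhds (-log (1 + 0))) :=
    ((tendsto_const_nhds.div_atTop (tendsto_pow_atTop two_ne_zero)).const_add 1).log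
      (by norm_num) |>.neg
  refine ⟨integrableOn_Ioi_deriv_of_nonneg hcont hderiv hnonneg hlim, ?_⟩
  rw [integral_Ioi_of_hasDerivAt_of_nonneg hcont hderiv hnonneg hlim]
  simp

theorem tsum_integral_Ici_eq_integral_countingFunction_mul {S : Set ℕ} (hS : S ⊆ {m | 0 < m})
    {g : ℝ → ℝ} (hg : ∀ t : S, IntegrableOn g (Ici ((t : ℕ) : ℝ)))
    (hg_nonneg : ∀ x, 1 ≤ x → 0 ≤ g x)
    (hsum : Summable fun t : S => ∫ x in Ici ((t : ℕ) : ℝ), g x) :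
    ∑' t : S, ∫ x in Ici ((t : ℕ) : ℝ), g x = ∫ x in Ioi 0, countingFunction S x * g x := by
  have hint (t : S) : Integrable ((Ici ((t : ℕ) : ℝ)).indicator g) :=
    (integrable_indicator_iff measurableSet_Ici).mpr (hg t)
  have hnorm (t : S) :
      ∫ x, ‖(Ici ((t : ℕ) : ℝ)).indicator g x‖ = ∫ x in Ici ((t : ℕ) : ℝ), g x := by
    simp_rw [norm_indicator_eq_indicator_norm, integral_indicator measurableSet_Ici]
    refine setIntegral_congr_fun measurableSet_Ici fun x hx => norm_of_nonneg (hg_nonneg x ?_)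
    exact le_trans (by exact_mod_cast hS t.2) hx
  have hpointwise x :
      ∑' t : S, (Ici ((t : ℕ) : ℝ)).indicator g x = countingFunction S x * g x := by
    rw [← countingFunction.tsum_indicator_Ici hS, ← tsum_mul_right]
    congr 1 with t
    simp [indicator_apply]
  simp_rw [← integral_indicator measurableSet_Ici]
  rw [integral_tsum_of_summable_integral_norm hint (by simpa only [hnorm] using hsum)]
  simp_rw [hpointwise]
  exact (setIntegral_eq_integral_of_forall_compl_eq_zero fun x hx => by
    rw [countingFunction.eq_zero_of_nonpos S (not_lt.mp hx), zero_mul]).symm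

theorem summable_sq_div_natCast_sq_subtype (S : Set ℕ) (y : ℝ) :
    Summable fun t : S => y ^ 2 / ((t : ℕ) : ℝ) ^ 2 := by
  have h := ((summable_one_div_nat_pow.mpr one_lt_two).mul_left (y ^ 2)).subtype S
  exact h.congr fun t => mul_one_div _ _

theorem tsum_log_one_add_sq_div_sq_eq_integral {S : Set ℕ} (hS : S ⊆ {m | 0 < m}) (y : ℝ) :
    ∑' t : S, log (1 + y ^ 2 / ((t : ℕ) : ℝ) ^ 2) =
      ∫ x in Ioi 0, countingFunction S x * (2 * y ^ 2 / (x * (x ^ 2 + y ^ 2))) := by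
  have ht (t : S) : (0 : ℝ) < (t : ℕ) := by exact_mod_cast hS t.2
  have hkernel (t : S) := integrableOn_and_integral_Ioi_eq_log_one_add_sq_div_sq y (ht t)
  have hlog (t : S) : log (1 + y ^ 2 / ((t : ℕ) : ℝ) ^ 2) =
      ∫ x in Ici ((t : ℕ) : ℝ), 2 * y ^ 2 / (x * (x ^ 2 + y ^ 2)) := by
    rw [integral_Ici_eq_integral_Ioi, (hkernel t).2]
  have hsum := Real.summable_log_one_add_of_summable (summable_sq_div_natCast_sq_subtype S y)
  rw [tsum_congr hlog]
  refine tsum_integral_Ici_eq_integral_countingFunction_mul hS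
    (fun t => (integrableOn_Ici_iff_integrableOn_Ioi).mpr (hkernel t).1) (fun x hx => ?_)
    (hsum.congr hlog)
  have : 0 < x := one_pos.trans_le hx
  positivity

theorem log_norm_tprod_one_sub_sq_mul_I_div_sq (S : Set ℕ) (y : ℝ) :
    log ‖∏' t : S, (1 - ((y : ℂ) * Complex.I) ^ 2 / ((t : ℕ) : ℂ) ^ 2)‖ =
      ∑' t : S, log (1 + y ^ 2 / ((t : ℕ) : ℝ) ^ 2) := by
  set g : S → ℝ := fun t => 1 + y ^ 2 / ((t : ℕ) : ℝ) ^ 2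
  have hsum := summable_sq_div_natCast_sq_subtype S y
  have hpos t : 0 < g t := by positivity
  have hfactor (t : S) :
      1 - ((y : ℂ) * Complex.I) ^ 2 / ((t : ℕ) : ℂ) ^ 2 = Complex.ofRealHom (g t) := by
    simp only [g, Complex.ofRealHom_eq_coe]
    push_cast
    rw [mul_pow, Complex.I_sq]
    ring
  simp_rw [hfactor]
  rw [← (Real.multipliable_one_add_of_summable hsum).map_tprod _ Complex.continuous_ofReal,
    ← rexp_tsum_eq_tprod hpos (Real.summable_log_one_add_of_summable hsum),
    Complex.ofRealHom_eq_coe, Complex.norm_real, norm_of_nonneg (exp_pos _).le, log_exp]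

theorem tendsto_integral_Ioi_comp_mul_mul {h k : ℝ → ℝ} (hh_meas : Measurable h) {C : ℝ}
    (hh_bound : ∀ x, |h x| ≤ C) {δ : ℝ} (hh : Tendsto h atTop (nhds δ))
    (hk : IntegrableOn k (Ioi 0)) :
    Tendsto (fun y => ∫ u in Ioi 0, h (y * u) * k u) atTop (nhds (δ * ∫ u in Ioi 0, k u)) := by
  rw [← integral_const_mul]
  refine tendsto_integral_filter_of_dominated_convergence (fun u => C * ‖k u‖)
    (.of_forall fun y => ?_) (.of_forall fun y => .of_forall fun u => ?_) (hk.norm.const_mul C) ?_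
  · exact (hh_meas.comp (measurable_const_mul y)).aestronglyMeasurable.mul hk.aestronglyMeasurable
  · rw [norm_mul]
    exact mul_le_mul_of_nonneg_right (hh_bound _) (norm_nonneg _)
  · filter_upwards [ae_restrict_mem measurableSet_Ioi] with u hu
    exact (hh.comp (tendsto_id.atTop_mul_const hu)).mul_const (k u)

theorem integral_Ioi_mul_kernel_eq_mul_integral_rescaled (f : ℝ → ℝ) {y : ℝ} (hy : 0 < y) :
    ∫ x in Ioi 0, f x * (2 * y ^ 2 / (x * (x ^ 2 + y ^ 2))) =
      y * ∫ u in Ioi 0, f (y * u) / (y * u) * (2 * (1 + u ^ 2)⁻¹) := by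
  have hrescale : EqOn (fun u => f (y * u) / (y * u) * (2 * (1 + u ^ 2)⁻¹))
      (fun u => f (y * u) * (2 * y ^ 2 / (y * u * ((y * u) ^ 2 + y ^ 2)))) (Ioi 0) := by
    intro u (hu : 0 < u)
    field_simp
    ring
  rw [setIntegral_congr_fun measurableSet_Ioi hrescale, ← smul_eq_mul (a := y),
    integral_comp_mul_left_Ioi' (fun x => f x * (2 * y ^ 2 / (x * (x ^ 2 + y ^ 2)))) 0 hy,
    mul_zero]

theorem tendsto_tsum_log_one_add_sq_div_sq_div_atTop {S : Set ℕ} {δ : ℝ}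
    (hS : S ⊆ {m | 0 < m}) (hd : HasDensity S δ) :
    Tendsto (fun y : ℝ => (∑' t : S, log (1 + y ^ 2 / ((t : ℕ) : ℝ) ^ 2)) / y) atTop
      (nhds (π * δ)) := by
  have hk : IntegrableOn (fun u : ℝ => 2 * (1 + u ^ 2)⁻¹) (Ioi 0) :=
    (integrable_inv_one_add_sq.const_mul 2).integrableOn
  have hlim := tendsto_integral_Ioi_comp_mul_mul (h := fun x => countingFunction S x / x)
    ((countingFunction.monotone S).measurable.div measurable_id)
    (countingFunction.abs_div_le_one S) hd hk
  rw [integral_const_mul, integral_Ioi_inv_one_add_sq, arctan_zero,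
    show δ * (2 * (π / 2 - 0)) = π * δ by ring] at hlim
  refine hlim.congr' ?_
  filter_upwards [eventually_gt_atTop 0] with y hy
  rw [tsum_log_one_add_sq_div_sq_eq_integral hS,
    integral_Ioi_mul_kernel_eq_mul_integral_rescaled _ hy, mul_div_cancel_left₀ _ hy.ne']

/-- For `F(z) = ∏_{t ∈ S} (1 - z²/t²)` with `S` of density `δ`, the growth of
`log |F|` on the imaginary axis is exactly `πδ|y| + o(|y|)`. -/
theorem log_abs_product_on_imaginary_axis (S : Set ℕ) (δ : ℝ)
    (hS : S ⊆ {m : ℕ | 0 < m}) (hd : HasDensity S δ)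
    (F : ℂ → ℂ)
    (hF : ∀ z : ℂ, F z = ∏' t : S, (1 - z ^ 2 / ((t : ℕ) : ℂ) ^ 2)) :
    Tendsto (fun y : ℝ => Real.log (‖F (y * Complex.I)‖) / |y|)
      atTop (nhds (π * δ)) ∧
    Tendsto (fun y : ℝ => Real.log (‖F (y * Complex.I)‖) / |y|)
      atBot (nhds (π * δ)) := by
  set G : ℝ → ℝ := fun y => (∑' t : S, log (1 + y ^ 2 / ((t : ℕ) : ℝ) ^ 2)) / |y|
  have hG : (fun y : ℝ => log ‖F (y * Complex.I)‖ / |y|) = G := by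
    ext y
    rw [hF, log_norm_tprod_one_sub_sq_mul_I_div_sq]
  have hG_even y : G (-y) = G y := by simp only [G, neg_sq, abs_neg]
  have htop : Tendsto G atTop (nhds (π * δ)) :=
    (tendsto_tsum_log_one_add_sq_div_sq_div_atTop hS hd).congr' <|
      (eventually_gt_atTop 0).mono fun y hy => by simp only [G, abs_of_pos hy]
  rw [hG]
  exact ⟨htop, (htop.comp tendsto_neg_atBot_atTop).congr fun y => hG_even y⟩
end
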